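/- arXiv:2008.04534 — 6 statements merged into one kernel-verified Lean document; each statement's English description precedes it below -/
import Mathlib

section
/- If P is a subset of [0,∞]^I (I countable) such that for every a ∈ I there exists u ∈ P with u_a > 0, and for every a ∈ I there exists m ∈ ℝ≥0 such that u_a ≤ m for all u ∈ P, then the orthogonal P⊥ = {u' : ∀ u ∈ P, ∑_i u_i u'_i ≤ 1} is contained in [0,∞)^I and satisfies the same two properties. -/
/-! A point `u ∈ P` with `u a > 0` forces `u' a ≤ (u a)⁻¹` for every `u' ∈ P⊥`, which gives both
finiteness and a uniform bound on the `a`-th coordinates of `P⊥`. Conversely, if `m` bounds the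
`a`-th coordinates of `P`, then `m⁻¹ • e_a` lies in `P⊥`. -/

open scoped ENNReal NNReal

noncomputable section

def dot {I : Type*} (u v : I → ℝ≥0∞) : ℝ≥0∞ := ∑' i, u i * v i

def orth {I : Type*} (P : Set (I → ℝ≥0∞)) : Set (I → ℝ≥0∞) :=
  {v | ∀ u ∈ P, dot u v ≤ 1}

section

variable {I : Type*}

theorem mul_le_dot (u v : I → ℝ≥0∞) (a : I) : u a * v a ≤ dot u v :=
  ENNReal.le_tsum a

theorem dot_pi_single [DecidableEq I] (u : I → ℝ≥0∞) (a : I) (c : ℝ≥0∞) :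
    dot u (Pi.single a c) = u a * c := by
  unfold dot
  rw [tsum_eq_single a fun b hb => by simp [hb]]
  simp

theorem le_inv_of_mem_orth {P : Set (I → ℝ≥0∞)} {u v : I → ℝ≥0∞} (hu : u ∈ P)
    (hv : v ∈ orth P) (a : I) : v a ≤ (u a)⁻¹ :=
  ENNReal.le_inv_iff_mul_le.mpr <| by
    rw [mul_comm]
    exact (mul_le_dot u v a).trans (hv u hu)

theorem pi_single_inv_mem_orth [DecidableEq I] {P : Set (I → ℝ≥0∞)} {a : I} {m : ℝ≥0}
    (hm : ∀ u ∈ P, u a ≤ m) : Pi.single a (m : ℝ≥0∞)⁻¹ ∈ orth P := fun u hu =>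
  calc dot u (Pi.single a (m : ℝ≥0∞)⁻¹) = u a * (m : ℝ≥0∞)⁻¹ := dot_pi_single u a _
    _ ≤ m * (m : ℝ≥0∞)⁻¹ := mul_le_mul_left (hm u hu) _
    _ ≤ 1 := ENNReal.mul_inv_le_one _

end

theorem stmt0_general {I : Type*} (P : Set (I → ℝ≥0∞))
    (h1 : ∀ a : I, ∃ u ∈ P, 0 < u a)
    (h2 : ∀ a : I, ∃ m : ℝ≥0, ∀ u ∈ P, u a ≤ m) :
    (∀ u' ∈ orth P, ∀ a : I, u' a ≠ ⊤) ∧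
    (∀ a : I, ∃ u' ∈ orth P, 0 < u' a) ∧
    (∀ a : I, ∃ m : ℝ≥0, ∀ u' ∈ orth P, u' a ≤ m) := by
  classical
  refine ⟨fun v hv a => ?_, fun a => ?_, fun a => ?_⟩
  · obtain ⟨u, hu, hua⟩ := h1 a
    exact ne_top_of_le_ne_top (ENNReal.inv_ne_top.mpr hua.ne') (le_inv_of_mem_orth hu hv a)
  · obtain ⟨m, hm⟩ := h2 a
    exact ⟨_, pi_single_inv_mem_orth hm, by simp⟩
  · obtain ⟨u, hu, hua⟩ := h1 a
    refine ⟨(u a)⁻¹.toNNReal, fun v hv => ?_⟩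
    rw [ENNReal.coe_toNNReal (ENNReal.inv_ne_top.mpr hua.ne')]
    exact le_inv_of_mem_orth hu hv a

theorem stmt0 {I : Type*} [Countable I] (P : Set (I → ℝ≥0∞))
    (h1 : ∀ a : I, ∃ u ∈ P, 0 < u a)
    (h2 : ∀ a : I, ∃ m : ℝ≥0, ∀ u ∈ P, u a ≤ m) :
    (∀ u' ∈ orth P, ∀ a : I, u' a ≠ ⊤) ∧
    (∀ a : I, ∃ u' ∈ orth P, 0 < u' a) ∧
    (∀ a : I, ∃ m : ℝ≥0, ∀ u' ∈ orth P, u' a ≤ m) :=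
  stmt0_general P h1 h2
end
end

section
/- If U = (E, ≼) is an extensional structure (i.e., U = U⊥⊥) on a PCS X, then ≼ is reflexive and transitive on E. -/
open scoped ENNReal NNReal

noncomputable section

/-- A pre-extensional structure: a set `E` of vectors together with a binary
relation `r` (intended to be a relation on `E`). -/
structure PreExt (I : Type*) where
  E : Set (I → ℝ≥0∞)
  r : (I → ℝ≥0∞) → (I → ℝ≥0∞) → Prop

/-- The set component of the dual pre-extensional structure, on the dual PCS `orth P`. -/
def dualE {I : Type*} (P : Set (I → ℝ≥0∞)) (U : PreExt I) : Set (I → ℝ≥0∞) :=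
  {u' | u' ∈ orth P ∧ ∀ u v, u ∈ U.E → v ∈ U.E → U.r u v → dot u u' ≤ dot v u'}

/-- The dual pre-extensional structure on the dual PCS `orth P`. -/
def PreExt.dual {I : Type*} (P : Set (I → ℝ≥0∞)) (U : PreExt I) : PreExt I where
  E := dualE P U
  r := fun u' v' => u' ∈ dualE P U ∧ v' ∈ dualE P U ∧ ∀ u ∈ U.E, dot u u' ≤ dot u v'

/-- Componentwise inclusion of pre-extensional structures. -/
def PreExt.le {I : Type*} (U₁ U₂ : PreExt I) : Prop :=
  U₁.E ⊆ U₂.E ∧ ∀ u v, U₁.r u v → U₂.r u v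

/-- `P` is (the set of vectors of) a PCS with web `I`. -/
def IsPCS {I : Type*} (P : Set (I → ℝ≥0∞)) : Prop :=
  orth (orth P) = P ∧ (∀ a : I, ∃ u ∈ P, 0 < u a) ∧
    (∀ a : I, ∃ m : ℝ≥0, ∀ u ∈ P, u a ≤ m)

/-- `U` is a pre-extensional structure *on* the PCS `P`. -/
def IsPreExtOn {I : Type*} (P : Set (I → ℝ≥0∞)) (U : PreExt I) : Prop :=
  U.E ⊆ P ∧ ∀ u v, U.r u v → u ∈ U.E ∧ v ∈ U.E

theorem stmt5 {I : Type*} [Countable I] (P : Set (I → ℝ≥0∞)) (hP : IsPCS P)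
    (U : PreExt I) (hU : IsPreExtOn P U)
    (hext : U = (U.dual P).dual (orth P)) :
    (∀ u ∈ U.E, U.r u u) ∧
    (∀ u v w, U.r u v → U.r v w → U.r u w) := by
  constructor
  · intro u hu
    rw [hext] at hu ⊢
    exact ⟨hu, hu, fun u' _ => le_refl _⟩
  · intro u v w huv hvw
    rw [hext] at huv hvw ⊢
    obtain ⟨h1, h2, h3⟩ := huv
    obtain ⟨h4, h5, h6⟩ := hvw
    exact ⟨h1, h5, fun x hx => (h3 x hx).trans (h6 x hx)⟩
end
end

section
/- Let U = (E, ≼) be an extensional structure on a PCS X. If (u(n)) and (v(n)) are ≤-monotone sequences in P(X) with u(n) ≼ v(n) for each n, then sup_n u(n) ≼ sup_n v(n) (the pointwise suprema, which belong to P(X)). -/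
/-! An extensional structure equals the dual of its dual, so membership in it and its relation
are given by conditions `dot w x ≤ 1`, `dot u x ≤ dot v x` and `dot u x ≤ dot u y` on the
vectors `x`, `y` tested. By monotone convergence for sums in `[0, ∞]`, `dot u` commutes with
suprema of increasing sequences, so each of these inequalities passes from the terms of the
sequences to their suprema. -/

open scoped ENNReal NNReal

noncomputable section

namespace ENNReal

theorem tsum_iSup_of_monotone {α ι : Type*} [Preorder ι] [IsDirectedOrder ι]
    {f : α → ι → ℝ≥0∞} (hf : ∀ a, Monotone (f a)) :
    ∑' a, ⨆ i, f a i = ⨆ i, ∑' a, f a i := by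
  refine le_antisymm ?_ (iSup_le fun i => ENNReal.tsum_le_tsum fun a => le_iSup (f a) i)
  rw [ENNReal.tsum_eq_iSup_sum]
  refine iSup_le fun s => ?_
  rw [ENNReal.finsetSum_iSup_of_monotone hf]
  exact iSup_mono fun i => ENNReal.sum_le_tsum s

end ENNReal

section MonotoneSupremum

variable {I ι : Type*} [Preorder ι] [IsDirectedOrder ι]

theorem dot_iSup_right (w : I → ℝ≥0∞) {f : ι → I → ℝ≥0∞} (hf : Monotone f) :
    dot w (fun a => ⨆ i, f i a) = ⨆ i, dot w (f i) := by
  simp only [dot, ENNReal.mul_iSup]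
  exact ENNReal.tsum_iSup_of_monotone fun a _ _ hij => mul_le_mul_right (hf hij a) (w a)

theorem iSup_mem_dualE (P : Set (I → ℝ≥0∞)) (U : PreExt I) {f : ι → I → ℝ≥0∞}
    (hf : Monotone f) (hmem : ∀ i, f i ∈ dualE P U) :
    (fun a => ⨆ i, f i a) ∈ dualE P U := by
  refine ⟨fun w hw => ?_, fun u v hu hv huv => ?_⟩
  · rw [dot_iSup_right w hf]
    exact iSup_le fun i => (hmem i).1 w hw
  · rw [dot_iSup_right u hf, dot_iSup_right v hf]
    exact iSup_mono fun i => (hmem i).2 u v hu hv huv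

theorem PreExt.dual_r_iSup (P : Set (I → ℝ≥0∞)) (U : PreExt I) {f g : ι → I → ℝ≥0∞}
    (hf : Monotone f) (hg : Monotone g) (hfg : ∀ i, (U.dual P).r (f i) (g i)) :
    (U.dual P).r (fun a => ⨆ i, f i a) (fun a => ⨆ i, g i a) := by
  refine ⟨iSup_mem_dualE P U hf fun i => (hfg i).1, iSup_mem_dualE P U hg fun i => (hfg i).2.1,
    fun u hu => ?_⟩
  rw [dot_iSup_right u hf, dot_iSup_right u hg]
  exact iSup_mono fun i => (hfg i).2.2 u hu

end MonotoneSupremum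

theorem stmt9_general {I : Type*} (P : Set (I → ℝ≥0∞))
    (U : PreExt I)
    (hext : U = (U.dual P).dual (orth P))
    (u v : ℕ → I → ℝ≥0∞) (hu : Monotone u) (hv : Monotone v)
    (hr : ∀ n, U.r (u n) (v n)) :
    U.r (fun a => ⨆ n, u n a) (fun a => ⨆ n, v n a) := by
  rw [hext] at hr ⊢
  exact PreExt.dual_r_iSup (orth P) (U.dual P) hu hv hr

theorem stmt9 {I : Type*} [Countable I] (P : Set (I → ℝ≥0∞)) (hP : IsPCS P)
    (U : PreExt I) (hU : IsPreExtOn P U)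
    (hext : U = (U.dual P).dual (orth P))
    (u v : ℕ → I → ℝ≥0∞) (hu : Monotone u) (hv : Monotone v)
    (humem : ∀ n, u n ∈ P) (hvmem : ∀ n, v n ∈ P)
    (hr : ∀ n, U.r (u n) (v n)) :
    U.r (fun a => ⨆ n, u n a) (fun a => ⨆ n, v n a) :=
  stmt9_general P U hext u v hu hv hr
end
end

section
/- With the extensional relation ⊑ on P(Flat_e(I)) defined via inversion indices, u ⊑ v holds if and only if for every u' ∈ [0,1]^{I∪{⊤}} with ∑ weights forming an element of the dual PCS and satisfying u'_i ≤ u'_⊤ for all i ∈ I, one has ⟨u, u'⟩ ≤ ⟨v, u'⟩. -/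
open scoped ENNReal

noncomputable section

/-- The Dirac mass at the error element `⊤` (encoded as `none`). -/
def eTop {I : Type*} : Option I → ℝ≥0∞ := fun x => x.elim 1 fun _ => 0

/-- Sub-probability distributions on `I` with an extra error point `⊤ = none`. -/
def Pflat (I : Type*) : Set (Option I → ℝ≥0∞) := {u | ∑' x, u x ≤ 1}

/-- The extensional preorder on `Pflat I`, defined via inversion indices:
`u ⊑ v` iff `u ⊤ + ∑_{i : u i > v i} u i ≤ v ⊤ + ∑_{i : u i > v i} v i`. -/
def extLE {I : Type*} (u v : Option I → ℝ≥0∞) : Prop :=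
  u none + ∑' i : {i : I // v (some i) < u (some i)}, u (some i.1)
    ≤ v none + ∑' i : {i : I // v (some i) < u (some i)}, v (some i.1)

/-!
Off the inversion set `S = {i | v i < u i}` the truncated difference `u i - v i`
vanishes, so `u ⊑ v` says exactly that the total excess `∑ᵢ (u i - v i)` fits into
`v ⊤ - u ⊤`. For a test functional with `u' i ≤ u' ⊤`, each excess `u i - v i` is weighed by
`u' i ≤ u' ⊤`, so moving it onto `⊤` can only increase the pairing; hence `⟨u, u'⟩ ≤ ⟨v, u'⟩`.
Conversely, the indicator of `{⊤} ∪ S` is a test functional whose pairing inequality is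
`u ⊑ v` verbatim.
-/

lemma ENNReal.tsum_option {I : Type*} (f : Option I → ℝ≥0∞) :
    ∑' x, f x = f none + ∑' i, f (some i) := by
  have hcompl : ({none} : Set (Option I))ᶜ = Set.range some := by
    ext x; cases x <;> simp
  rw [← ENNReal.summable.tsum_add_tsum_compl (s := {none}) ENNReal.summable, tsum_singleton,
    tsum_congr_set_coe f hcompl, tsum_range f (Option.some_injective I)]

lemma dot_option {I : Type*} (u w : Option I → ℝ≥0∞) :
    dot u w = u none * w none + ∑' i, u (some i) * w (some i) :=
  ENNReal.tsum_option _

lemma ENNReal.mul_le_mul_add_tsub_mul {a b c d : ℝ≥0∞} (hcd : c ≤ d) :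
    a * c ≤ b * c + (a - b) * d :=
  calc a * c ≤ (b + (a - b)) * c := by gcongr; exact le_add_tsub
    _ = b * c + (a - b) * c := add_mul _ _ _
    _ ≤ b * c + (a - b) * d := by gcongr

lemma ENNReal.tsum_subtype_lt_tsub {I : Type*} (a b : I → ℝ≥0∞) :
    ∑' i : {i // b i < a i}, (a i - b i) = ∑' i, (a i - b i) :=
  tsum_subtype_eq_of_support_subset (f := fun i => a i - b i) (s := {i | b i < a i})
    fun _ hi => by simpa [tsub_eq_zero_iff_le] using hi

lemma extLE_iff_add_tsum_tsub_le {I : Type*} {u v : Option I → ℝ≥0∞} (hv : v ∈ Pflat I) :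
    extLE u v ↔ u none + ∑' i, (u (some i) - v (some i)) ≤ v none := by
  set S := {i : I // v (some i) < u (some i)}
  have hvS : ∑' i : S, v (some i.1) ≠ ∞ := by
    refine ne_top_of_le_ne_top ENNReal.one_ne_top (le_trans ?_ hv)
    calc ∑' i : S, v (some i.1) ≤ ∑' i, v (some i) := ENNReal.tsum_comp_le_tsum_of_injective
          Subtype.val_injective _
      _ ≤ ∑' x, v x := by rw [ENNReal.tsum_option]; exact le_add_self
  have huS : ∑' i : S, u (some i.1)
      = ∑' i : S, v (some i.1) + ∑' i, (u (some i) - v (some i)) := by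
    rw [← ENNReal.tsum_subtype_lt_tsub, ← ENNReal.tsum_add]
    exact tsum_congr fun i => (add_tsub_cancel_of_le i.2.le).symm
  rw [extLE, huS, ← add_assoc, add_comm _ (∑' i : S, _), add_assoc, add_comm (v none)]
  exact ENNReal.add_le_add_iff_left hvS

lemma dot_le_dot_of_add_tsum_tsub_le {I : Type*} {u v u' : Option I → ℝ≥0∞}
    (h : u none + ∑' i, (u (some i) - v (some i)) ≤ v none)
    (hu' : ∀ i : I, u' (some i) ≤ u' none) : dot u u' ≤ dot v u' := by
  set excess := ∑' i, (u (some i) - v (some i))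
  have hsome : ∑' i, u (some i) * u' (some i)
      ≤ ∑' i, v (some i) * u' (some i) + excess * u' none := by
    rw [← ENNReal.tsum_mul_right, ← ENNReal.tsum_add]
    exact ENNReal.tsum_le_tsum fun i => ENNReal.mul_le_mul_add_tsub_mul (hu' i)
  rw [dot_option, dot_option]
  calc u none * u' none + ∑' i, u (some i) * u' (some i)
      ≤ u none * u' none + (∑' i, v (some i) * u' (some i) + excess * u' none) := by gcongr
    _ = (u none + excess) * u' none + ∑' i, v (some i) * u' (some i) := by ring
    _ ≤ v none * u' none + ∑' i, v (some i) * u' (some i) := by gcongr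

def topIndicator {I : Type*} (S : Set I) : Option I → ℝ≥0∞ :=
  fun x => x.elim 1 (S.indicator 1)

lemma dot_topIndicator {I : Type*} (w : Option I → ℝ≥0∞) (S : Set I) :
    dot w (topIndicator S) = w none + ∑' i : S, w (some i.1) := by
  rw [dot_option, tsum_subtype S fun i => w (some i)]
  simp only [topIndicator, Option.elim, mul_one]
  congr 1
  refine tsum_congr fun i => ?_
  by_cases hi : i ∈ S <;> simp [hi]

lemma topIndicator_le_one {I : Type*} (S : Set I) (x : Option I) : topIndicator S x ≤ 1 := by
  cases x
  · rfl
  · exact Set.indicator_apply_le' (fun _ => le_rfl) fun _ => zero_le_one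

theorem stmt12_general {I : Type*}
    (u v : Option I → ℝ≥0∞) (hv : v ∈ Pflat I) :
    extLE u v ↔
      ∀ u' : Option I → ℝ≥0∞, (∀ x, u' x ≤ 1) → (∀ i : I, u' (some i) ≤ u' none) →
        dot u u' ≤ dot v u' := by
  refine ⟨fun h u' _ hu' =>
    dot_le_dot_of_add_tsum_tsub_le ((extLE_iff_add_tsum_tsub_le hv).mp h) hu', fun h => ?_⟩
  have htest := h (topIndicator {i | v (some i) < u (some i)})
    (topIndicator_le_one _) fun i => topIndicator_le_one _ (some i)
  rwa [dot_topIndicator, dot_topIndicator] at htest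

theorem stmt12 {I : Type*} [Countable I]
    (u v : Option I → ℝ≥0∞) (hu : u ∈ Pflat I) (hv : v ∈ Pflat I) :
    extLE u v ↔
      ∀ u' : Option I → ℝ≥0∞, (∀ x, u' x ≤ 1) → (∀ i : I, u' (some i) ≤ u' none) →
        dot u u' ≤ dot v u' :=
  stmt12_general u v hv
end
end

section
/- The relation ⊑ on P(Flat_e(I)) (defined via inversion indices) is a preorder: it is reflexive and transitive. -/
open scoped ENNReal

noncomputable section

/-! Writing `(u - v)⁺ = ∑ᵢ (uᵢ - vᵢ)` (truncated subtraction), `u ⊑ v` says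
`u ⊤ + (u - v)⁺ ≤ v ⊤` as soon as `v` has finite mass. In this form transitivity is the
triangle inequality `(u - w)⁺ ≤ (u - v)⁺ + (v - w)⁺`. -/

theorem ENNReal.tsum_tsub_add_tsum_subtype_lt {α : Type*} (f g : α → ℝ≥0∞) :
    ∑' i, (f i - g i) + ∑' i : {i // g i < f i}, g i = ∑' i : {i // g i < f i}, f i := by
  have hsupp : Function.support (fun i => f i - g i) ⊆ {i | g i < f i} := fun i hi =>
    lt_of_not_ge fun hle => hi (tsub_eq_zero_of_le hle)
  rw [← tsum_subtype_eq_of_support_subset hsupp]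
  exact ENNReal.tsum_add.symm.trans (tsum_congr fun i => tsub_add_cancel_of_le i.2.le)

theorem ENNReal.tsum_tsub_le_tsum_tsub_add_tsum_tsub {α : Type*} (f g h : α → ℝ≥0∞) :
    ∑' i, (f i - h i) ≤ ∑' i, (f i - g i) + ∑' i, (g i - h i) := by
  rw [← ENNReal.tsum_add]
  exact ENNReal.tsum_le_tsum fun i => tsub_le_tsub_add_tsub

theorem extLE_iff {I : Type*} (u v : Option I → ℝ≥0∞) (hv : ∑' i, v (some i) ≠ ∞) :
    extLE u v ↔ u none + ∑' i, (u (some i) - v (some i)) ≤ v none := by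
  set s := {i : I // v (some i) < u (some i)}
  have hs : ∑' i : s, v (some i.1) ≠ ∞ :=
    ne_top_of_le_ne_top hv <|
      ENNReal.tsum_comp_le_tsum_of_injective Subtype.val_injective fun i => v (some i)
  rw [extLE, ← ENNReal.tsum_tsub_add_tsum_subtype_lt (fun i => u (some i)) (fun i => v (some i)),
    ← add_assoc, ENNReal.add_le_add_iff_right hs]

theorem extLE_trans {I : Type*} {u v w : Option I → ℝ≥0∞} (hv : ∑' i, v (some i) ≠ ∞)
    (hw : ∑' i, w (some i) ≠ ∞) (huv : extLE u v) (hvw : extLE v w) : extLE u w := by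
  rw [extLE_iff _ _ hv] at huv
  rw [extLE_iff _ _ hw] at hvw ⊢
  calc u none + ∑' i, (u (some i) - w (some i))
      ≤ u none + ∑' i, (u (some i) - v (some i)) + ∑' i, (v (some i) - w (some i)) := by
        rw [add_assoc]
        gcongr
        exact ENNReal.tsum_tsub_le_tsum_tsub_add_tsum_tsub _ _ _
    _ ≤ v none + ∑' i, (v (some i) - w (some i)) := by gcongr
    _ ≤ w none := hvw

theorem tsum_some_ne_top_of_mem_Pflat {I : Type*} {v : Option I → ℝ≥0∞} (hv : v ∈ Pflat I) :
    ∑' i, v (some i) ≠ ∞ :=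
  ne_top_of_le_ne_top ENNReal.one_ne_top <|
    (ENNReal.tsum_comp_le_tsum_of_injective (Option.some_injective I) v).trans hv

theorem stmt14_general {I : Type*} :
    (∀ u ∈ Pflat I, extLE u u) ∧
    (∀ u ∈ Pflat I, ∀ v ∈ Pflat I, ∀ w ∈ Pflat I,
      extLE u v → extLE v w → extLE u w) :=
  ⟨fun _ _ => le_rfl, fun _ _ _ hv _ hw =>
    extLE_trans (tsum_some_ne_top_of_mem_Pflat hv) (tsum_some_ne_top_of_mem_Pflat hw)⟩

theorem stmt14 {I : Type*} [Countable I] :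
    (∀ u ∈ Pflat I, extLE u u) ∧
    (∀ u ∈ Pflat I, ∀ v ∈ Pflat I, ∀ w ∈ Pflat I,
      extLE u v → extLE v w → extLE u w) :=
  stmt14_general
end
end

section
/- In the PCS X = (!1 ⊸ 1) of power series f(u) = ∑_n s_n uⁿ with ∑_n s_n ≤ 1 on [0,1], ordered by s ⊑ t iff f_s(u) ≤ f_t(u) for all u ∈ [0,1]: the sequence e(n) of monomials uⁿ (i.e., e(n)_i = δ_{n,i}) is ⊑-decreasing (e(n+1) ⊑ e(n)), its pointwise infimum over the coefficients is 0, yet inf_n f_{e(n)}(1) = 1; moreover the e(n) are pairwise ≤-unbounded in the coefficientwise order (each is ≤-maximal among sequences with ∑ s_n ≤ 1). -/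
open scoped ENNReal

noncomputable section

/-- The `n`-th "monomial" element of `P(!1 ⊸ 1)`: the coefficient sequence of `u ^ n`. -/
def eMon (n : ℕ) : ℕ → ℝ≥0∞ := fun i => if i = n then 1 else 0

/-- The power series associated with a coefficient sequence `s`. -/
def fSer (s : ℕ → ℝ≥0∞) (u : ℝ≥0∞) : ℝ≥0∞ := ∑' i, s i * u ^ i

lemma eMon_eq_pi_single (n : ℕ) : eMon n = Pi.single n 1 := by
  ext i
  simp [eMon, Pi.single_apply]

lemma fSer_eMon (n : ℕ) (u : ℝ≥0∞) : fSer (eMon n) u = u ^ n := by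
  simp [fSer, eMon_eq_pi_single, Pi.single_apply]

lemma iInf_eMon_apply (i : ℕ) : ⨅ n, eMon n i = 0 :=
  le_antisymm ((iInf_le _ (i + 1)).trans_eq (by simp [eMon])) bot_le

lemma ENNReal.eq_pi_single_of_tsum_le_one {ι : Type*} [DecidableEq ι] {t : ι → ℝ≥0∞} {a : ι}
    (ht : ∑' i, t i ≤ 1) (ha : 1 ≤ t a) : t = Pi.single a 1 := by
  have hta : t a = 1 := le_antisymm ((ENNReal.le_tsum a).trans ht) ha
  ext i
  rcases eq_or_ne i a with rfl | hi
  · simp [hta]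
  · have hsum : t a + t i ≤ 1 := calc
      t a + t i = ∑ j ∈ {a, i}, t j := by rw [Finset.sum_pair hi.symm]
      _ ≤ ∑' j, t j := ENNReal.sum_le_tsum _
      _ ≤ 1 := ht
    rw [hta] at hsum
    simpa [hi] using nonpos_iff_eq_zero.mp
      (ENNReal.le_of_add_le_add_left ENNReal.one_ne_top (hsum.trans_eq (add_zero 1).symm))

theorem stmt17 :
    (∀ n : ℕ, ∀ u : ℝ≥0∞, u ≤ 1 → fSer (eMon (n + 1)) u ≤ fSer (eMon n) u) ∧
    (∀ i : ℕ, (⨅ n, eMon n i) = 0) ∧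
    ((⨅ n, fSer (eMon n) 1) = 1) ∧
    (∀ n : ℕ, ∀ t : ℕ → ℝ≥0∞, (∑' i, t i) ≤ 1 → eMon n ≤ t → eMon n = t) := by
  refine ⟨fun n u hu => ?_, iInf_eMon_apply, by simp [fSer_eMon], fun n t ht hle => ?_⟩
  · simpa only [fSer_eMon] using pow_le_pow_of_le_one zero_le hu n.le_succ
  · have htn : 1 ≤ t n := by simpa [eMon] using hle n
    rw [eMon_eq_pi_single, ENNReal.eq_pi_single_of_tsum_le_one ht htn]
end
end
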